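/- Comparability of energies when the relative momentum is small (Lemma 3.4): Let p, p' ∈ ℝ³ and suppose ḡ := √(2(p'⁰p⁰ − p'·p − 1)) ≤ 1/2, where p⁰ := √(1+|p|²) and p'⁰ := √(1+|p'|²). Then p'⁰ ≤ √5 · p⁰ and p⁰ ≤ √5 · p'⁰. -/
import Mathlib


open scoped InnerProductSpace

noncomputable section

/-- Momentum space ℝ³ with the Euclidean structure. -/
abbrev E3 : Type := EuclideanSpace ℝ (Fin 3)

/-- The relativistic energy `p⁰ = √(1+|p|²)`. -/
def en (p : E3) : ℝ := Real.sqrt (1 + ‖p‖ ^ 2)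

/-- The relative momentum `g(p,q) = √(2(p⁰q⁰ − p·q − 1))`. -/
def relg (p q : E3) : ℝ := Real.sqrt (2 * (en p * en q - ⟪p, q⟫_ℝ - 1))

/-- `s = g² + 4`. -/
def srel (p q : E3) : ℝ := relg p q ^ 2 + 4

/-- The post-collisional momentum `p'` in the center-of-momentum parametrization. -/
def pPost (p q ω : E3) : E3 :=
  (2 : ℝ)⁻¹ • (p + q) + (relg p q / 2) •
    (ω + (((en p + en q) / Real.sqrt (srel p q) - 1) *
      (⟪p + q, ω⟫_ℝ / ‖p + q‖ ^ 2)) • (p + q))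

/-- The post-collisional momentum `q' = p + q − p'`. -/
def qPost (p q ω : E3) : E3 := p + q - pPost p q ω

/-- The cosine of the scattering angle. -/
def cosTheta (p q ω : E3) : ℝ :=
  (-((en p - en q) * (en (pPost p q ω) - en (qPost p q ω))) +
    ⟪p - q, pPost p q ω - qPost p q ω⟫_ℝ) / relg p q ^ 2

/-- The cross product on ℝ³ (transported to the Euclidean space structure). -/
def cross3 (p q : E3) : E3 :=
  (EuclideanSpace.equiv (Fin 3) ℝ).symm
    (crossProduct ((EuclideanSpace.equiv (Fin 3) ℝ) p) ((EuclideanSpace.equiv (Fin 3) ℝ) q))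


set_option maxHeartbeats 2000000

/-- **Comparability of energies when the relative momentum is small** (Lemma 3.4). -/
theorem energy_comparable_of_small_relg (p p' : E3)
    (h : relg p' p ≤ 1 / 2) :
    en p' ≤ Real.sqrt 5 * en p ∧ en p ≤ Real.sqrt 5 * en p' := by
  have hna : (0:ℝ) ≤ 1 + ‖p‖ ^ 2 := by positivity
  have hnb : (0:ℝ) ≤ 1 + ‖p'‖ ^ 2 := by positivity
  have ha2 : en p ^ 2 = 1 + ‖p‖ ^ 2 := Real.sq_sqrt hna
  have hb2 : en p' ^ 2 = 1 + ‖p'‖ ^ 2 := Real.sq_sqrt hnb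
  have ha1 : 1 ≤ en p := by
    rw [en]
    have := Real.sqrt_le_sqrt (show (1:ℝ) ≤ 1 + ‖p‖ ^ 2 by nlinarith [sq_nonneg ‖p‖])
    rwa [Real.sqrt_one] at this
  have hb1 : 1 ≤ en p' := by
    rw [en]
    have := Real.sqrt_le_sqrt (show (1:ℝ) ≤ 1 + ‖p'‖ ^ 2 by nlinarith [sq_nonneg ‖p'‖])
    rwa [Real.sqrt_one] at this
  have hnp : (0:ℝ) ≤ ‖p‖ := norm_nonneg _
  have hnp' : (0:ℝ) ≤ ‖p'‖ := norm_nonneg _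
  -- Cauchy–Schwarz
  have hcs : |⟪p', p⟫_ℝ| ≤ ‖p'‖ * ‖p‖ := abs_real_inner_le_norm _ _
  have hc2 : ⟪p', p⟫_ℝ ^ 2 ≤ (en p' ^ 2 - 1) * (en p ^ 2 - 1) := by
    have h1 : ⟪p', p⟫_ℝ ^ 2 ≤ (‖p'‖ * ‖p‖) ^ 2 := by
      rw [← sq_abs]
      exact pow_le_pow_left₀ (abs_nonneg _) hcs 2
    calc ⟪p', p⟫_ℝ ^ 2 ≤ (‖p'‖ * ‖p‖) ^ 2 := h1
      _ = (en p' ^ 2 - 1) * (en p ^ 2 - 1) := by rw [ha2, hb2]; ring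
  -- `en p' * en p ≥ 1 + ⟪p',p⟫`
  have habpos : 0 < en p' * en p := by nlinarith
  have hA1 : 1 + ⟪p', p⟫_ℝ ≤ en p' * en p := by
    have hle : ⟪p', p⟫_ℝ ≤ ‖p'‖ * ‖p‖ := (abs_le.mp hcs).2
    have h2 : (1 + ‖p'‖ * ‖p‖) ^ 2 ≤ (en p' * en p) ^ 2 := by
      have : (en p' * en p) ^ 2 = (1 + ‖p'‖ ^ 2) * (1 + ‖p‖ ^ 2) := by
        rw [mul_pow, ha2, hb2]
      nlinarith [sq_nonneg (‖p'‖ - ‖p‖)]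
    nlinarith [mul_nonneg hnp' hnp]
  -- from the hypothesis: `en p' * en p - ⟪p',p⟫ ≤ 9/8`
  have hArg : (0:ℝ) ≤ 2 * (en p' * en p - ⟪p', p⟫_ℝ - 1) := by linarith
  have hsq : 2 * (en p' * en p - ⟪p', p⟫_ℝ - 1) ≤ 1 / 4 := by
    have h0 : Real.sqrt (2 * (en p' * en p - ⟪p', p⟫_ℝ - 1)) ≤ 1 / 2 := h
    nlinarith [Real.sq_sqrt hArg, Real.sqrt_nonneg (2 * (en p' * en p - ⟪p', p⟫_ℝ - 1))]
  have hA : en p' * en p - ⟪p', p⟫_ℝ ≤ 9 / 8 := by linarith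
  -- key inequality : a² + b² ≤ (9/4) a b
  set a := en p
  set b := en p'
  set c := ⟪p', p⟫_ℝ
  have hkey : a ^ 2 + b ^ 2 ≤ 9 / 4 * (a * b) := by
    have hprod : a ^ 2 + b ^ 2 - 1 ≤ (b * a - c) * (b * a + c) := by nlinarith [hc2]
    have hsum : b * a + c ≤ 2 * (b * a) - 1 := by linarith
    have hsumpos : (0:ℝ) ≤ b * a + c := by nlinarith
    have hmul : (b * a - c) * (b * a + c) ≤ 9 / 8 * (b * a + c) :=
      mul_le_mul_of_nonneg_right hA hsumpos
    nlinarith [hprod, hmul, hsum]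
  have hb2a : b ≤ 2 * a := by
    by_contra hcon
    push_neg at hcon
    have h1 : (0:ℝ) < b - 2 * a := by linarith
    have h2 : (0:ℝ) < 4 * b - a := by linarith
    have h3 := mul_pos h1 h2
    have h4 : (b - 2 * a) * (4 * b - a) = 4 * b ^ 2 - 9 * (a * b) + 2 * a ^ 2 := by ring
    rw [h4] at h3
    linarith [sq_nonneg ‖p‖]
  have ha2b : a ≤ 2 * b := by
    by_contra hcon
    push_neg at hcon
    have h1 : (0:ℝ) < a - 2 * b := by linarith
    have h2 : (0:ℝ) < 4 * a - b := by linarith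
    have h3 := mul_pos h1 h2
    have h4 : (a - 2 * b) * (4 * a - b) = 4 * a ^ 2 - 9 * (a * b) + 2 * b ^ 2 := by ring
    rw [h4] at h3
    linarith [sq_nonneg ‖p'‖]
  have h5 : (2:ℝ) ≤ Real.sqrt 5 := by
    have : ((2:ℝ)) = Real.sqrt 4 := by
      rw [show (4:ℝ) = 2 ^ 2 by norm_num, Real.sqrt_sq (by norm_num)]
    rw [this]
    exact Real.sqrt_le_sqrt (by norm_num)
  constructor
  · calc b ≤ 2 * a := hb2a
      _ ≤ Real.sqrt 5 * a := by nlinarith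
  · calc a ≤ 2 * b := ha2b
      _ ≤ Real.sqrt 5 * b := by nlinarith
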